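/- Fix 1 ≤ ℓ < k ≤ K and assume that for every i with ℓ < i ≤ k there exists x ∈ S_i with p(x,S_{[0,ℓ]}) > 0. Define c*_ℓ = min_{ℓ<i≤k} min_{x∈S_i : p(x,S_{[0,ℓ]})>0} p(x,S_ℓ)/p(x,S_{[0,ℓ]}), and define recursively c*_{ℓ,ℓ} = 1 and, for j = ℓ+1, …, k, c*_{j,ℓ} = min_{x∈S_j} ( r(x,S_ℓ) + Σ_{i=ℓ+1}^{j−1} r(x,S_i) · c*_{i,ℓ} ). Then: (1) c*_{i,ℓ} ≥ c*_ℓ for every i with ℓ < i ≤ k; and (2) if for some i with ℓ < i ≤ k every x ∈ S_i satisfies p(x,S_{[0,ℓ]}) > 0 and min_{x∈S_i} p(x,S_ℓ)/p(x,S_{[0,ℓ]}) > c*_ℓ, then c*_{i,ℓ} > c*_ℓ. -/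

import Mathlib

/-!
For `x ∈ S_j` with `ℓ < j` put `D = p(x,S_{[0,j-1]}) > 0` and `P = p(x,S_{[0,ℓ]})`. Since
`r(x,S_i) = p(x,S_i)/D` for `i < j` and `Σ_{ℓ<i<j} p(x,S_i) = D - P`, once every `c*_{i,ℓ}` with
`ℓ < i < j` is known to be `≥ c*_ℓ` the objective defining `c*_{j,ℓ}` is at least
`c*_ℓ + (p(x,S_ℓ) - c*_ℓ P)/D`. The correction term is nonnegative because `c*_ℓ P ≤ p(x,S_ℓ)`
(trivially when `P = 0`), which gives (1) by strong induction on `j`, and it is positive under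
the hypothesis of (2).
-/

open Finset

/-- A finite state space partitioned into fitness levels `S_0, …, S_K`
(`lev x = k` means `x ∈ S_k`), together with an elitist row-stochastic
transition matrix `p`. -/
structure LevelChain (S : Type*) [Fintype S] where
  /-- the number of non-optimal levels -/
  K : ℕ
  /-- the level of each state -/
  lev : S → ℕ
  one_le_K : 1 ≤ K
  lev_le : ∀ x, lev x ≤ K
  level_nonempty : ∀ k ≤ K, ∃ x, lev x = k
  /-- transition probabilities -/
  p : S → S → ℝ
  p_nonneg : ∀ x y, 0 ≤ p x y
  p_row_sum : ∀ x, ∑ y, p x y = 1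
  elitist : ∀ x y, lev x < lev y → p x y = 0

variable {S : Type*} [Fintype S]

/-- The fitness level `S_k`. -/
def LevelChain.level (c : LevelChain S) (k : ℕ) : Finset S :=
  Finset.univ.filter fun x => c.lev x = k

/-- The union of levels `S_{[i,j]} = S_i ∪ ⋯ ∪ S_j`. -/
def LevelChain.levels (c : LevelChain S) (i j : ℕ) : Finset S :=
  Finset.univ.filter fun x => i ≤ c.lev x ∧ c.lev x ≤ j

/-- `p(x, A) = Σ_{y ∈ A} p(x, y)`. -/
def LevelChain.pSet (c : LevelChain S) (x : S) (A : Finset S) : ℝ :=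
  ∑ y ∈ A, c.p x y

/-- The standing reachability assumption: from every non-optimal state one can
move to a better level with positive probability. -/
def LevelChain.Reachable (c : LevelChain S) : Prop :=
  ∀ k, 1 ≤ k → k ≤ c.K → ∀ x, c.lev x = k → 0 < c.pSet x (c.levels 0 (k - 1))

/-- Conditional transition probability `r(x, S_j)`:
`r(x,S_j) = p(x,S_j)/(1 − p(x,S_k))` for `j ≠ k = lev x`, and `r(x,S_k) = 0`. -/
noncomputable def LevelChain.r (c : LevelChain S) (x : S) (j : ℕ) : ℝ :=
  if j = c.lev x then 0
  else c.pSet x (c.level j) / (1 - c.pSet x (c.level (c.lev x)))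

/-- `r_min(X_k, S_j) = min_{x ∈ S_k} r(x, S_j)`. -/
noncomputable def LevelChain.rmin (c : LevelChain S) (k j : ℕ) : ℝ :=
  sInf ((fun x => c.r x j) '' {x | c.lev x = k})

/-- `r_max(X_k, S_j) = max_{x ∈ S_k} r(x, S_j)`. -/
noncomputable def LevelChain.rmax (c : LevelChain S) (k j : ℕ) : ℝ :=
  sSup ((fun x => c.r x j) '' {x | c.lev x = k})

/-- `m` is the mean hitting time of the optimal level `S_0`. -/
def LevelChain.IsMeanHittingTime (c : LevelChain S) (m : S → ℝ) : Prop :=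
  (∀ x, 0 ≤ m x) ∧
  (∀ x, c.lev x = 0 → m x = 0) ∧
  (∀ x, c.lev x ≠ 0 → m x = 1 + ∑ y, c.p x y * m y)

/-- `mbar` is the mean level-leaving time on `S ∖ S_0`. -/
def LevelChain.IsLevelLeavingTime (c : LevelChain S) (mbar : S → ℝ) : Prop :=
  (∀ x, c.lev x ≠ 0 → 0 ≤ mbar x) ∧
  (∀ x, c.lev x ≠ 0 → mbar x = 1 + ∑ y ∈ c.level (c.lev x), c.p x y * mbar y)

/-- `h ℓ x` is the probability of hitting level `S_ℓ` starting from `x`. -/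
def LevelChain.IsHitProb (c : LevelChain S) (h : ℕ → S → ℝ) : Prop :=
  (∀ ℓ x, 0 ≤ h ℓ x ∧ h ℓ x ≤ 1) ∧
  (∀ ℓ x, c.lev x = ℓ → h ℓ x = 1) ∧
  (∀ ℓ x, c.lev x < ℓ → h ℓ x = 0) ∧
  (∀ ℓ x, ℓ < c.lev x →
    h ℓ x = ∑ y ∈ c.levels ℓ (c.lev x), c.p x y * h ℓ y)

namespace LevelChain

variable (c : LevelChain S)

lemma pSet_nonneg (x : S) (A : Finset S) : 0 ≤ c.pSet x A :=
  sum_nonneg fun y _ => c.p_nonneg x y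

lemma pSet_levels_eq_sum (x : S) (a b : ℕ) :
    c.pSet x (c.levels a b) = ∑ i ∈ Icc a b, c.pSet x (c.level i) := by
  classical
  have hunion : c.levels a b = (Icc a b).biUnion c.level := by
    ext y
    simp [levels, level]
  have hdisj : (Icc a b : Set ℕ).PairwiseDisjoint c.level := by
    intro i _ j _ hij
    simp only [Function.onFun, disjoint_left, level, mem_filter, mem_univ, true_and]
    exact fun y hi hj => hij (hi ▸ hj)
  rw [hunion, pSet, sum_biUnion hdisj]
  rfl

lemma pSet_levels_zero_lev (x : S) : c.pSet x (c.levels 0 (c.lev x)) = 1 := by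
  rw [← c.p_row_sum x, pSet]
  refine sum_subset (subset_univ _) fun y _ hy => c.elitist x y ?_
  simpa [levels] using hy

lemma one_sub_pSet_level_lev {x : S} (hx : 1 ≤ c.lev x) :
    1 - c.pSet x (c.level (c.lev x)) = c.pSet x (c.levels 0 (c.lev x - 1)) := by
  have h := c.pSet_levels_zero_lev x
  rw [pSet_levels_eq_sum, ← Nat.sub_add_cancel hx, sum_Icc_succ_top (Nat.zero_le _),
    Nat.sub_add_cancel hx] at h
  rw [pSet_levels_eq_sum]
  linarith

lemma sum_pSet_level_Ioo (x : S) {ℓ j : ℕ} (hℓj : ℓ < j) :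
    ∑ i ∈ Ioo ℓ j, c.pSet x (c.level i) =
      c.pSet x (c.levels 0 (j - 1)) - c.pSet x (c.levels 0 ℓ) := by
  have hsplit : Icc 0 (j - 1) = Icc 0 ℓ ∪ Ioo ℓ j := by
    ext i; simp only [mem_Icc, mem_Ioo, mem_union]; omega
  have hdisj : Disjoint (Icc 0 ℓ) (Ioo ℓ j) := by
    simp only [disjoint_left, mem_Icc, mem_Ioo]; omega
  rw [pSet_levels_eq_sum, pSet_levels_eq_sum, hsplit, sum_union hdisj]
  ring

lemma r_of_ne_lev {x : S} (hx : 1 ≤ c.lev x) {i : ℕ} (hi : i ≠ c.lev x) :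
    c.r x i = c.pSet x (c.level i) / c.pSet x (c.levels 0 (c.lev x - 1)) := by
  rw [r, if_neg hi, c.one_sub_pSet_level_lev hx]

lemma Reachable.pSet_levels_pos {c : LevelChain S} (hreach : c.Reachable) {x : S}
    (hx : 1 ≤ c.lev x) : 0 < c.pSet x (c.levels 0 (c.lev x - 1)) :=
  hreach _ hx (c.lev_le x) x rfl

lemma add_div_le_r_add_sum {ℓ : ℕ} {x : S} (hx : ℓ < c.lev x)
    (hD : 0 < c.pSet x (c.levels 0 (c.lev x - 1))) {a : ℝ} {w : ℕ → ℝ}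
    (hw : ∀ i ∈ Ioo ℓ (c.lev x), a ≤ w i) :
    a + (c.pSet x (c.level ℓ) - a * c.pSet x (c.levels 0 ℓ)) /
        c.pSet x (c.levels 0 (c.lev x - 1)) ≤
      c.r x ℓ + ∑ i ∈ Ioo ℓ (c.lev x), c.r x i * w i := by
  set D := c.pSet x (c.levels 0 (c.lev x - 1))
  have hr : ∀ i ≠ c.lev x, c.r x i = c.pSet x (c.level i) / D :=
    fun i hi => c.r_of_ne_lev (by omega) hi
  have hsum : a * (D - c.pSet x (c.levels 0 ℓ)) / D ≤ ∑ i ∈ Ioo ℓ (c.lev x), c.r x i * w i := by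
    rw [← c.sum_pSet_level_Ioo x hx, mul_sum, sum_div]
    refine sum_le_sum fun i hi => ?_
    rw [hr i (mem_Ioo.mp hi).2.ne, mul_comm, mul_div_right_comm]
    exact mul_le_mul_of_nonneg_left (hw i hi) (div_nonneg (c.pSet_nonneg x _) hD.le)
  calc a + (c.pSet x (c.level ℓ) - a * c.pSet x (c.levels 0 ℓ)) / D
      = c.pSet x (c.level ℓ) / D + a * (D - c.pSet x (c.levels 0 ℓ)) / D := by
        field_simp; ring
    _ ≤ c.r x ℓ + ∑ i ∈ Ioo ℓ (c.lev x), c.r x i * w i := by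
        rw [hr ℓ hx.ne]; linarith

variable {c} {ℓ j : ℕ} {a : ℝ} {w : ℕ → ℝ}

lemma le_sInf_r_add_sum (hreach : c.Reachable) (hℓj : ℓ < j) (hjK : j ≤ c.K)
    (hw : ∀ i ∈ Ioo ℓ j, a ≤ w i)
    (ha : ∀ x, c.lev x = j → a * c.pSet x (c.levels 0 ℓ) ≤ c.pSet x (c.level ℓ)) :
    a ≤ sInf ((fun x => c.r x ℓ + ∑ i ∈ Ioo ℓ j, c.r x i * w i) '' {x | c.lev x = j}) := by
  have hne : {x | c.lev x = j}.Nonempty := c.level_nonempty j hjK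
  refine le_csInf (hne.image _) ?_
  rintro _ ⟨x, rfl, rfl⟩
  have hD := hreach.pSet_levels_pos (x := x) (by omega)
  calc a ≤ a + (c.pSet x (c.level ℓ) - a * c.pSet x (c.levels 0 ℓ)) /
        c.pSet x (c.levels 0 (c.lev x - 1)) :=
        le_add_of_nonneg_right (div_nonneg (sub_nonneg.2 (ha x rfl)) hD.le)
    _ ≤ _ := c.add_div_le_r_add_sum hℓj hD hw

lemma lt_sInf_r_add_sum (hreach : c.Reachable) (hℓj : ℓ < j) (hjK : j ≤ c.K)
    (hw : ∀ i ∈ Ioo ℓ j, a ≤ w i)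
    (ha : ∀ x, c.lev x = j → a * c.pSet x (c.levels 0 ℓ) < c.pSet x (c.level ℓ)) :
    a < sInf ((fun x => c.r x ℓ + ∑ i ∈ Ioo ℓ j, c.r x i * w i) '' {x | c.lev x = j}) := by
  have hne : {x | c.lev x = j}.Nonempty := c.level_nonempty j hjK
  obtain ⟨x, rfl, hmin⟩ :=
    (hne.image fun x => c.r x ℓ + ∑ i ∈ Ioo ℓ j, c.r x i * w i).csInf_mem (Set.toFinite _)
  rw [← hmin]
  have hD := hreach.pSet_levels_pos (x := x) (by omega)
  calc a < a + (c.pSet x (c.level ℓ) - a * c.pSet x (c.levels 0 ℓ)) /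
        c.pSet x (c.levels 0 (c.lev x - 1)) :=
        lt_add_of_pos_right _ (div_pos (sub_pos.2 (ha x rfl)) hD)
    _ ≤ _ := c.add_div_le_r_add_sum hℓj hD hw

lemma le_of_eq_sInf_r_add_sum (hreach : c.Reachable) {k : ℕ} (hk : k ≤ c.K)
    (ha : ∀ x, ℓ < c.lev x → c.lev x ≤ k →
      a * c.pSet x (c.levels 0 ℓ) ≤ c.pSet x (c.level ℓ))
    (hw : ∀ j, ℓ < j → j ≤ k →
      w j = sInf ((fun x => c.r x ℓ + ∑ i ∈ Ioo ℓ j, c.r x i * w i) '' {x | c.lev x = j})) :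
    ∀ j, ℓ < j → j ≤ k → a ≤ w j := by
  intro j
  induction j using Nat.strong_induction_on with
  | _ j ih =>
    intro hℓj hjk
    rw [hw j hℓj hjk]
    refine le_sInf_r_add_sum hreach hℓj (hjk.trans hk) (fun i hi => ?_) fun x hx => ?_
    · exact ih i (mem_Ioo.1 hi).2 (mem_Ioo.1 hi).1 ((mem_Ioo.1 hi).2.le.trans hjk)
    · exact ha x (hx ▸ hℓj) (hx ▸ hjk)

end LevelChain

theorem best_typeCkl_dominates_typeCl_lower_general
    (c : LevelChain S) (hreach : c.Reachable)
    (ℓ k : ℕ) (hk : k ≤ c.K)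
    (clstar : ℝ)
    (hclstar : clstar =
      sInf ((fun x => c.pSet x (c.level ℓ) / c.pSet x (c.levels 0 ℓ)) ''
        {x | ℓ < c.lev x ∧ c.lev x ≤ k ∧ 0 < c.pSet x (c.levels 0 ℓ)}))
    (cstar : ℕ → ℝ)
    (hcstar : ∀ j, ℓ < j → j ≤ k → cstar j =
      sInf ((fun x => c.r x ℓ + ∑ i ∈ Finset.Ioo ℓ j, c.r x i * cstar i) ''
        {x | c.lev x = j})) :
    (∀ i, ℓ < i → i ≤ k → clstar ≤ cstar i) ∧
    (∀ i, ℓ < i → i ≤ k →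
      (∀ x, c.lev x = i → 0 < c.pSet x (c.levels 0 ℓ)) →
      clstar < sInf ((fun x => c.pSet x (c.level ℓ) / c.pSet x (c.levels 0 ℓ)) ''
        {x | c.lev x = i}) →
      clstar < cstar i) := by
  have hratio : ∀ x, ℓ < c.lev x → c.lev x ≤ k →
      clstar * c.pSet x (c.levels 0 ℓ) ≤ c.pSet x (c.level ℓ) := by
    intro x hℓx hxk
    rcases (c.pSet_nonneg x (c.levels 0 ℓ)).eq_or_lt with hP | hP
    · rw [← hP, mul_zero]
      exact c.pSet_nonneg x _
    · rw [← le_div_iff₀ hP, hclstar]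
      exact csInf_le (Set.toFinite _).bddBelow ⟨x, ⟨hℓx, hxk, hP⟩, rfl⟩
  have hle := LevelChain.le_of_eq_sInf_r_add_sum hreach hk hratio hcstar
  refine ⟨hle, fun i hℓi hik hpos hlt => ?_⟩
  rw [hcstar i hℓi hik]
  refine LevelChain.lt_sInf_r_add_sum hreach hℓi (hik.trans hk)
    (fun j hj => hle j (mem_Ioo.1 hj).1 ((mem_Ioo.1 hj).2.le.trans hik)) fun x hx => ?_
  rw [← lt_div_iff₀ (hpos x hx)]
  exact hlt.trans_le (csInf_le (Set.toFinite _).bddBelow ⟨x, hx, rfl⟩)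

/-- The best Type-`c_{k,ℓ}` lower-bound coefficients Pareto dominate
the best Type-`c_ℓ` coefficient: with
`c*_ℓ = min_{ℓ<i≤k} min_{x∈S_i : p(x,S_{[0,ℓ]})>0} p(x,S_ℓ)/p(x,S_{[0,ℓ]})` and
`c*_{ℓ,ℓ} = 1`, `c*_{j,ℓ} = min_{x∈S_j}( r(x,S_ℓ) + Σ_{i=ℓ+1}^{j−1} r(x,S_i)·c*_{i,ℓ} )`,
we have (1) `c*_{i,ℓ} ≥ c*_ℓ` for all `ℓ < i ≤ k`, and (2) strict inequality at any `i`
where `min_{x∈S_i} p(x,S_ℓ)/p(x,S_{[0,ℓ]}) > c*_ℓ` (all `x ∈ S_i` having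
`p(x,S_{[0,ℓ]}) > 0`). -/
theorem best_typeCkl_dominates_typeCl_lower
    (c : LevelChain S) (hreach : c.Reachable)
    (ℓ k : ℕ) (hℓ : 1 ≤ ℓ) (hℓk : ℓ < k) (hk : k ≤ c.K)
    (hex : ∀ i, ℓ < i → i ≤ k → ∃ x, c.lev x = i ∧ 0 < c.pSet x (c.levels 0 ℓ))
    (clstar : ℝ)
    (hclstar : clstar =
      sInf ((fun x => c.pSet x (c.level ℓ) / c.pSet x (c.levels 0 ℓ)) ''
        {x | ℓ < c.lev x ∧ c.lev x ≤ k ∧ 0 < c.pSet x (c.levels 0 ℓ)}))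
    (cstar : ℕ → ℝ)
    (hcstardiag : cstar ℓ = 1)
    (hcstar : ∀ j, ℓ < j → j ≤ k → cstar j =
      sInf ((fun x => c.r x ℓ + ∑ i ∈ Finset.Ioo ℓ j, c.r x i * cstar i) ''
        {x | c.lev x = j})) :
    (∀ i, ℓ < i → i ≤ k → clstar ≤ cstar i) ∧
    (∀ i, ℓ < i → i ≤ k →
      (∀ x, c.lev x = i → 0 < c.pSet x (c.levels 0 ℓ)) →
      clstar < sInf ((fun x => c.pSet x (c.level ℓ) / c.pSet x (c.levels 0 ℓ)) ''
        {x | c.lev x = i}) →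
      clstar < cstar i) :=
  best_typeCkl_dominates_typeCl_lower_general c hreach ℓ k hk clstar hclstar cstar hcstar
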